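/- A noetherian gcd-monoid M satisfies the right 3-Ore condition if and only if any three right basic elements of M that pairwise admit a common right multiple admit a global common right multiple. -/

import Mathlib

namespace MFR

variable {M : Type*} [Monoid M]

/-- `a` left-divides `b`. -/
def LeftDvd (a b : M) : Prop := ∃ x, a * x = b

/-- `a` right-divides `b`. -/
def RightDvd (a b : M) : Prop := ∃ x, x * a = b

/-- `m` is a right lcm of `a` and `b`. -/
def IsRightLcm (a b m : M) : Prop :=
  LeftDvd a m ∧ LeftDvd b m ∧ ∀ m', LeftDvd a m' → LeftDvd b m' → LeftDvd m m'

/-- `m` is a left lcm of `a` and `b`. -/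
def IsLeftLcm (a b m : M) : Prop :=
  RightDvd a m ∧ RightDvd b m ∧ ∀ m', RightDvd a m' → RightDvd b m' → RightDvd m m'

/-- `d` is a left gcd of `a` and `b`. -/
def IsLeftGcd (a b d : M) : Prop :=
  LeftDvd d a ∧ LeftDvd d b ∧ ∀ e, LeftDvd e a → LeftDvd e b → LeftDvd e d

/-- `d` is a right gcd of `a` and `b`. -/
def IsRightGcd (a b d : M) : Prop :=
  RightDvd d a ∧ RightDvd d b ∧ ∀ e, RightDvd e a → RightDvd e b → RightDvd e d

/-- A gcd-monoid: cancellative, no nontrivial invertible elements,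
left and right gcds exist. -/
structure IsGcdMon (M : Type*) [Monoid M] : Prop where
  mul_left_cancel : ∀ a b c : M, a * b = a * c → b = c
  mul_right_cancel : ∀ a b c : M, b * a = c * a → b = c
  unit_eq_one : ∀ a : M, IsUnit a → a = 1
  exists_leftGcd : ∀ a b : M, ∃ d, IsLeftGcd a b d
  exists_rightGcd : ∀ a b : M, ∃ d, IsRightGcd a b d

/-- Proper left divisibility: `a < b`. -/
def PLDvd (a b : M) : Prop := ∃ x, ¬ IsUnit x ∧ a * x = b

/-- Proper right divisibility. -/
def PRDvd (a b : M) : Prop := ∃ x, ¬ IsUnit x ∧ x * a = b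

/-- Noetherian: proper left and right divisibility are well-founded. -/
def Noeth (M : Type*) [Monoid M] : Prop :=
  WellFounded (PLDvd (M := M)) ∧ WellFounded (PRDvd (M := M))

/-- Proper factor relation. -/
def Factor (a b : M) : Prop := ∃ x y, x * a * y = b ∧ (¬ IsUnit x ∨ ¬ IsUnit y)

/-- Atoms: not a product of two non-invertible elements. -/
def Atomic (a : M) : Prop := ¬ IsUnit a ∧ ∀ x y, a = x * y → IsUnit x ∨ IsUnit y

/-- Existence of a common right multiple. -/
def CommonRightMul (a b : M) : Prop := ∃ m, LeftDvd a m ∧ LeftDvd b m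

/-- Existence of a common left multiple. -/
def CommonLeftMul (a b : M) : Prop := ∃ m, RightDvd a m ∧ RightDvd b m

/-- The 3-Ore condition. -/
def ThreeOre (M : Type*) [Monoid M] : Prop :=
  (∀ a b c : M, CommonRightMul a b → CommonRightMul a c → CommonRightMul b c →
    ∃ m, LeftDvd a m ∧ LeftDvd b m ∧ LeftDvd c m) ∧
  (∀ a b c : M, CommonLeftMul a b → CommonLeftMul a c → CommonLeftMul b c →
    ∃ m, RightDvd a m ∧ RightDvd b m ∧ RightDvd c m)

/-- The product of two multifractions. -/
def fprod : List M → List M → List M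
  | [], b => b
  | a, [] => a
  | a, h :: t =>
    if a.length % 2 = 1 then a.dropLast ++ ((a.getLast?.getD 1) * h) :: t
    else a ++ h :: t

/-- The congruence `≃` on multifractions generated by `(1,∅)`, `(a/a,∅)`, `(1/a/a,∅)`. -/
inductive SimEq : List M → List M → Prop
  | one : SimEq [1] []
  | divPos (a : M) : SimEq [a, a] []
  | divNeg (a : M) : SimEq [1, a, a] []
  | refl (a : List M) : SimEq a a
  | symm {a b} : SimEq a b → SimEq b a
  | trans {a b c} : SimEq a b → SimEq b c → SimEq a c
  | mul {a b c d} : SimEq a b → SimEq c d → SimEq (fprod a c) (fprod b d)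

/-- The reduction rule `R_{i,x}` on multifractions (entries indexed from 1):
`Reduce i x a b` means `b = a • R_{i,x}`. -/
def Reduce (i : ℕ) (x : M) (a b : List M) : Prop :=
  (i = 1 ∧ ∃ (a₁ a₂ b₁ b₂ : M) (s : List M),
    a = a₁ :: a₂ :: s ∧ b = b₁ :: b₂ :: s ∧ b₁ * x = a₁ ∧ b₂ * x = a₂) ∨
  (2 ≤ i ∧ i % 2 = 0 ∧ ∃ (p s : List M) (am ai ap bi bp x' : M),
    p.length = i - 2 ∧
    a = p ++ am :: ai :: ap :: s ∧
    b = p ++ (am * x') :: bi :: bp :: s ∧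
    IsRightLcm x ai (x * bi) ∧ x * bi = ai * x' ∧ x * bp = ap) ∨
  (3 ≤ i ∧ i % 2 = 1 ∧ ∃ (p s : List M) (am ai ap bi bp x' : M),
    p.length = i - 2 ∧
    a = p ++ am :: ai :: ap :: s ∧
    b = p ++ (x' * am) :: bi :: bp :: s ∧
    IsLeftLcm x ai (bi * x) ∧ bi * x = x' * ai ∧ bp * x = ap)

/-- One-step reduction. -/
def Red (a b : List M) : Prop := ∃ i x, x ≠ (1 : M) ∧ Reduce i x a b

/-- Reflexive-transitive closure of one-step reduction. -/
def RedStar : List M → List M → Prop := Relation.ReflTransGen Red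

/-- Irreducible multifractions. -/
def RIrred (a : List M) : Prop := ∀ b, ¬ Red a b

/-- Right basic elements: closure of the atoms under right complement. -/
inductive RightBasic : M → Prop
  | atom {a : M} : Atomic a → RightBasic a
  | compl {a b a' : M} : RightBasic a → RightBasic b →
      IsRightLcm a b (b * a') → RightBasic a'

/-- Minimal number of atoms needed to express `a`. -/
noncomputable def atomLen (a : M) : ℕ :=
  sInf {n | ∃ l : List M, (∀ x ∈ l, Atomic x) ∧ l.length = n ∧ l.prod = a}

/-! A common multiple of `x * t`, `b`, `c` is built in two stages: first one of `x`, `b`, `c`,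
then one of `t` and the complements `b'`, `c'` of `b`, `c` past `x` (where `x ∨ b = x b'`).
Writing all three elements as products of right basic elements, the iterated lcm law and the
closure of basic elements under complement show that `b'`, `c'` are again products of at most
as many basic elements, so both stages are instances of the induction hypothesis on the total
length, down to three basic elements. -/

theorem LeftDvd.refl (a : M) : LeftDvd a a := ⟨1, mul_one a⟩

theorem LeftDvd.trans {a b c : M} (hab : LeftDvd a b) (hbc : LeftDvd b c) : LeftDvd a c := by
  obtain ⟨x, rfl⟩ := hab
  obtain ⟨y, rfl⟩ := hbc
  exact ⟨x * y, (mul_assoc a x y).symm⟩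

theorem LeftDvd.mul_right (a b : M) : LeftDvd a (a * b) := ⟨b, rfl⟩

theorem LeftDvd.mul_left {a b : M} (c : M) (h : LeftDvd a b) : LeftDvd (c * a) (c * b) := by
  obtain ⟨x, rfl⟩ := h
  exact ⟨x, mul_assoc c a x⟩

theorem LeftDvd.one_left (a : M) : LeftDvd 1 a := ⟨a, one_mul a⟩

theorem CommonRightMul.symm {a b : M} (h : CommonRightMul a b) : CommonRightMul b a :=
  let ⟨m, ham, hbm⟩ := h; ⟨m, hbm, ham⟩

theorem CommonRightMul.of_mul_left {x t b : M} (h : CommonRightMul (x * t) b) :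
    CommonRightMul x b :=
  let ⟨m, hm, hbm⟩ := h; ⟨m, (LeftDvd.mul_right x t).trans hm, hbm⟩

theorem IsRightLcm.symm {a b m : M} (h : IsRightLcm a b m) : IsRightLcm b a m :=
  ⟨h.2.1, h.1, fun m' hb ha => h.2.2 m' ha hb⟩

theorem isRightLcm_one_right (x : M) : IsRightLcm x 1 x :=
  ⟨LeftDvd.refl x, LeftDvd.one_left x, fun _ hx _ => hx⟩

theorem IsGcdMon.isLeftCancelMul (h : IsGcdMon M) : IsLeftCancelMul M :=
  ⟨fun a _ _ => h.mul_left_cancel a _ _⟩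

theorem exists_isRightLcm (h : IsGcdMon M) (hwf : WellFounded (PLDvd (M := M))) {a b : M}
    (hab : CommonRightMul a b) : ∃ m, IsRightLcm a b m := by
  obtain ⟨m, hm, hmin⟩ := hwf.has_min {m | LeftDvd a m ∧ LeftDvd b m} hab
  refine ⟨m, hm.1, hm.2, fun m' ham' hbm' => ?_⟩
  -- the left gcd of `m` and `m'` is again a common multiple, so by minimality it is `m`
  obtain ⟨d, ⟨x, hx⟩, hdm', hdmax⟩ := h.exists_leftGcd m m'
  have hxu : IsUnit x := by
    by_contra hxu
    exact hmin d ⟨hdmax a hm.1 ham', hdmax b hm.2 hbm'⟩ ⟨x, hxu, hx⟩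
  rw [h.unit_eq_one x hxu, mul_one] at hx
  exact hx ▸ hdm'

section LeftCancel

variable [IsLeftCancelMul M]

theorem IsRightLcm.commonRightMul_complement {x b b' t : M} (hl : IsRightLcm x b (x * b'))
    (h : CommonRightMul (x * t) b) : CommonRightMul t b' := by
  obtain ⟨p, ⟨q, rfl⟩, hbp⟩ := h
  obtain ⟨r, hr⟩ := hl.2.2 _ ((LeftDvd.mul_right x t).trans (LeftDvd.mul_right _ q)) hbp
  refine ⟨t * q, LeftDvd.mul_right t q, r, mul_left_cancel (a := x) ?_⟩
  rw [← mul_assoc, ← mul_assoc, hr]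

/-- The iterated lcm law. -/
theorem IsRightLcm.mul_of_complement {x u v β m : M} (h₁ : IsRightLcm x u (u * β))
    (h₂ : IsRightLcm β v m) : IsRightLcm x (u * v) (u * m) := by
  refine ⟨h₁.1.trans (h₂.1.mul_left u), h₂.2.1.mul_left u, ?_⟩
  rintro w hxw ⟨t, rfl⟩
  obtain ⟨r, hr⟩ := h₁.2.2 _ hxw ((LeftDvd.mul_right u v).trans (LeftDvd.mul_right _ t))
  have hβr : β * r = v * t := mul_left_cancel (by rw [← mul_assoc, ← mul_assoc, hr])
  obtain ⟨s, hs⟩ := h₂.2.2 _ (LeftDvd.mul_right β r) ⟨t, hβr.symm⟩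
  exact ⟨s, by rw [mul_assoc, hs, ← mul_assoc, hr]⟩

end LeftCancel

theorem exists_basic_complement (h : IsGcdMon M) (hwf : WellFounded (PLDvd (M := M)))
    {x : M} (hx : RightBasic x) :
    ∀ l : List M, (∀ y ∈ l, RightBasic y) → CommonRightMul x l.prod →
      ∃ l' : List M, (∀ y ∈ l', RightBasic y) ∧ l'.length ≤ l.length ∧
        IsRightLcm x l.prod (x * l'.prod) := by
  have := h.isLeftCancelMul
  intro l
  induction l generalizing x with
  | nil => exact fun _ _ => ⟨[], by simp, le_rfl, by simpa using isRightLcm_one_right x⟩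
  | cons u t ih =>
    intro hl hxl
    rw [List.forall_mem_cons] at hl
    rw [List.prod_cons] at hxl ⊢
    obtain ⟨_, hxu⟩ := exists_isRightLcm h hwf hxl.symm.of_mul_left.symm
    obtain ⟨β, rfl⟩ := hxu.2.1
    obtain ⟨α, hα⟩ := hxu.1
    have hβb : RightBasic β := .compl hx hl.1 hxu
    have hαb : RightBasic α := .compl hl.1 hx (hα ▸ hxu.symm)
    obtain ⟨l', hl', hlen, hlcm⟩ :=
      ih hβb hl.2 (hxu.symm.commonRightMul_complement hxl.symm).symm
    refine ⟨α :: l', List.forall_mem_cons.2 ⟨hαb, hl'⟩, by simpa using hlen, ?_⟩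
    rw [List.prod_cons, ← mul_assoc, hα, mul_assoc]
    exact hxu.mul_of_complement hlcm

theorem exists_atomic_leftDvd (hwf : WellFounded (PLDvd (M := M))) {a : M} (ha : ¬IsUnit a) :
    ∃ x, Atomic x ∧ LeftDvd x a := by
  obtain ⟨x, ⟨hxu, hxa⟩, hmin⟩ := hwf.has_min {x | ¬IsUnit x ∧ LeftDvd x a} ⟨a, ha, .refl a⟩
  refine ⟨x, ⟨hxu, fun u v huv => or_iff_not_and_not.2 fun ⟨hu, hv⟩ => ?_⟩, hxa⟩
  exact hmin u ⟨hu, (huv ▸ LeftDvd.mul_right u v).trans hxa⟩ ⟨v, hv, huv.symm⟩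

theorem exists_atomic_prod_eq (h : IsGcdMon M) (hn : Noeth M) (a : M) :
    ∃ l : List M, (∀ x ∈ l, Atomic x) ∧ l.prod = a := by
  induction a using hn.2.induction with
  | _ a ih =>
  by_cases ha : IsUnit a
  · exact ⟨[], by simp, (h.unit_eq_one a ha).symm⟩
  obtain ⟨x, hx, a', rfl⟩ := exists_atomic_leftDvd hn.1 ha
  obtain ⟨l, hl, rfl⟩ := ih _ ⟨x, hx.1, rfl⟩
  exact ⟨x :: l, List.forall_mem_cons.2 ⟨hx, hl⟩, List.prod_cons⟩

theorem prod_eq_one_or_of_length_le_one {p : M → Prop} {l : List M} (hl : ∀ x ∈ l, p x)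
    (hlen : l.length ≤ 1) : l.prod = 1 ∨ p l.prod := by
  match l, hlen with
  | [], _ => exact .inl List.prod_nil
  | [x], _ => exact .inr (by simpa using hl)

def CommonRightMul3 (a b c : M) : Prop := ∃ m, LeftDvd a m ∧ LeftDvd b m ∧ LeftDvd c m

def ThreeOreTriple (a b c : M) : Prop :=
  CommonRightMul a b → CommonRightMul a c → CommonRightMul b c → CommonRightMul3 a b c

theorem ThreeOreTriple.swap {a b c : M} (h : ThreeOreTriple a b c) : ThreeOreTriple b a c :=
  fun hba hbc hac =>
    let ⟨m, ham, hbm, hcm⟩ := h hba.symm hac hbc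
    ⟨m, hbm, ham, hcm⟩

theorem ThreeOreTriple.rotate {a b c : M} (h : ThreeOreTriple a b c) : ThreeOreTriple b c a :=
  fun hbc hba hca =>
    let ⟨m, ham, hbm, hcm⟩ := h hba.symm hca.symm hbc
    ⟨m, hbm, hcm, ham⟩

theorem threeOreTriple_one_left (b c : M) : ThreeOreTriple 1 b c :=
  fun _ _ ⟨m, hbm, hcm⟩ => ⟨m, .one_left m, hbm, hcm⟩

theorem CommonRightMul3.mul_of_complements [IsLeftCancelMul M] {x t b c b' c' : M}
    (hb : IsRightLcm x b (x * b')) (hc : IsRightLcm x c (x * c'))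
    (htb : CommonRightMul (x * t) b) (htc : CommonRightMul (x * t) c)
    (hxbc : CommonRightMul3 x b c) (ht : ThreeOreTriple t b' c') :
    CommonRightMul3 (x * t) b c := by
  obtain ⟨m, hxm, hbm, hcm⟩ := hxbc
  have hbc' : CommonRightMul b' c' :=
    (hb.commonRightMul_complement ⟨m, hc.2.2 m hxm hcm, hbm⟩).symm
  obtain ⟨w, htw, hbw, hcw⟩ :=
    ht (hb.commonRightMul_complement htb) (hc.commonRightMul_complement htc) hbc'
  exact ⟨x * w, htw.mul_left x, hb.2.1.trans (hbw.mul_left x), hc.2.1.trans (hcw.mul_left x)⟩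

theorem threeOreTriple_prod_of_two_le_length (h : IsGcdMon M)
    (hwf : WellFounded (PLDvd (M := M))) {n : ℕ}
    (ih : ∀ la lb lc : List M, (∀ x ∈ la, RightBasic x) → (∀ x ∈ lb, RightBasic x) →
      (∀ x ∈ lc, RightBasic x) → la.length + lb.length + lc.length < n →
      ThreeOreTriple la.prod lb.prod lc.prod)
    {la lb lc : List M} (ha : ∀ x ∈ la, RightBasic x) (hb : ∀ x ∈ lb, RightBasic x)
    (hc : ∀ x ∈ lc, RightBasic x) (hlen : la.length + lb.length + lc.length ≤ n)
    (h2 : 2 ≤ la.length) : ThreeOreTriple la.prod lb.prod lc.prod := by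
  have := h.isLeftCancelMul
  obtain ⟨x, t, rfl⟩ := List.exists_cons_of_length_pos (by omega : 0 < la.length)
  rw [List.forall_mem_cons] at ha
  rw [List.prod_cons]
  intro htb htc hbc
  obtain ⟨lb', hb', hlenb, hlcmb⟩ := exists_basic_complement h hwf ha.1 lb hb htb.of_mul_left
  obtain ⟨lc', hc', hlenc, hlcmc⟩ := exists_basic_complement h hwf ha.1 lc hc htc.of_mul_left
  have hxbc : CommonRightMul3 x lb.prod lc.prod := by
    simpa using ih [x] lb lc (by simpa using ha.1) hb hc (by simp at hlen h2 ⊢; omega)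
      (by simpa using htb.of_mul_left) (by simpa using htc.of_mul_left) hbc
  exact .mul_of_complements hlcmb hlcmc htb htc hxbc
    (ih t lb' lc' ha.2 hb' hc' (by simp at hlen; omega))

theorem threeOreTriple_prod (h : IsGcdMon M) (hwf : WellFounded (PLDvd (M := M)))
    (H : ∀ a b c : M, RightBasic a → RightBasic b → RightBasic c → ThreeOreTriple a b c)
    (la lb lc : List M) (ha : ∀ x ∈ la, RightBasic x) (hb : ∀ x ∈ lb, RightBasic x)
    (hc : ∀ x ∈ lc, RightBasic x) : ThreeOreTriple la.prod lb.prod lc.prod := by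
  have ih : ∀ la' lb' lc' : List M, (∀ x ∈ la', RightBasic x) → (∀ x ∈ lb', RightBasic x) →
      (∀ x ∈ lc', RightBasic x) →
      la'.length + lb'.length + lc'.length < la.length + lb.length + lc.length →
      ThreeOreTriple la'.prod lb'.prod lc'.prod :=
    fun la' lb' lc' ha' hb' hc' _ => threeOreTriple_prod h hwf H la' lb' lc' ha' hb' hc'
  by_cases h2a : 2 ≤ la.length
  · exact threeOreTriple_prod_of_two_le_length h hwf ih ha hb hc le_rfl h2a
  by_cases h2b : 2 ≤ lb.length
  · exact (threeOreTriple_prod_of_two_le_length h hwf ih hb ha hc (by omega) h2b).swap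
  by_cases h2c : 2 ≤ lc.length
  · exact (threeOreTriple_prod_of_two_le_length h hwf ih hc ha hb (by omega) h2c).rotate
  rcases prod_eq_one_or_of_length_le_one ha (by omega) with ha1 | ha1
  · exact ha1 ▸ threeOreTriple_one_left _ _
  rcases prod_eq_one_or_of_length_le_one hb (by omega) with hb1 | hb1
  · exact hb1 ▸ (threeOreTriple_one_left _ _).swap
  rcases prod_eq_one_or_of_length_le_one hc (by omega) with hc1 | hc1
  · exact hc1 ▸ (threeOreTriple_one_left _ _).rotate
  exact H _ _ _ ha1 hb1 hc1
termination_by la.length + lb.length + lc.length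

/-- a noetherian gcd-monoid satisfies the right 3-Ore condition
iff any three right basic elements pairwise admitting common right multiples
admit a global common right multiple. -/
theorem stmt_16 {M : Type*} [Monoid M] (h : IsGcdMon M) (hn : Noeth M) :
    (∀ a b c : M, CommonRightMul a b → CommonRightMul a c → CommonRightMul b c →
      ∃ m, LeftDvd a m ∧ LeftDvd b m ∧ LeftDvd c m) ↔
    (∀ a b c : M, RightBasic a → RightBasic b → RightBasic c →
      CommonRightMul a b → CommonRightMul a c → CommonRightMul b c →
      ∃ m, LeftDvd a m ∧ LeftDvd b m ∧ LeftDvd c m) := by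
  refine ⟨fun H a b c _ _ _ => H a b c, fun H a b c => ?_⟩
  have toBasic (l : List M) (hl : ∀ x ∈ l, Atomic x) : ∀ x ∈ l, RightBasic x :=
    fun x hx => .atom (hl x hx)
  obtain ⟨la, hla, rfl⟩ := exists_atomic_prod_eq h hn a
  obtain ⟨lb, hlb, rfl⟩ := exists_atomic_prod_eq h hn b
  obtain ⟨lc, hlc, rfl⟩ := exists_atomic_prod_eq h hn c
  exact threeOreTriple_prod h hn.1 H la lb lc (toBasic la hla) (toBasic lb hlb) (toBasic lc hlc)

end MFR
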